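/- Let f : H → ℝ on a Hilbert space be C², u* a point with δf(u*) = 0 and δ²f(u*) ≥ γ > 0, and suppose δ²f is Lipschitz with constant M near u*. Let g : H → ℝ be C² with ‖δg(u*)‖ ≤ ε and ‖δ²g(v) - δ²f(v)‖ ≤ γ/4 for v near u*. If ε ≤ γ²/(8M), then g has a critical point u_g with ‖u_g - u*‖ ≤ 4ε/γ. -/

import Mathlib

open Metric InnerProductSpace
open scoped NNReal RealInnerProductSpace

/-!
Let `A = δ²f(u*)`. Coercivity and Lax–Milgram make `A : H → H*` onto, with a right inverse of
norm at most `γ⁻¹`. On the closed ball of radius `δ = 4ε/γ` about `u*`, the Hessian of `g` stays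
within `γ/4 + Mδ ≤ 3γ/4` of `A`, so `δg` is approximated there by `A` up to `3γ/4`. The
surjectivity estimate behind the inverse function theorem (a Newton iteration with the fixed
operator `A`) then shows that `δg` maps this ball onto the ball of radius `(γ - 3γ/4)δ = ε`
about `δg(u*)`, which contains `0`.
-/

section Normed

variable {E F : Type*} [NormedAddCommGroup E] [NormedSpace ℝ E] [NormedAddCommGroup F]

theorem mul_norm_le_norm_apply_of_coercive
    {A : E →L[ℝ] E →L[ℝ] ℝ} {γ : ℝ} (hA : ∀ v, γ * ‖v‖ ^ 2 ≤ A v v) (v : E) :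
    γ * ‖v‖ ≤ ‖A v‖ := by
  rcases (norm_nonneg v).eq_or_lt with hv | hv
  · rw [← hv, mul_zero]
    exact norm_nonneg _
  · refine le_of_mul_le_mul_right ?_ hv
    calc γ * ‖v‖ * ‖v‖ = γ * ‖v‖ ^ 2 := by ring
      _ ≤ A v v := hA v
      _ ≤ ‖A v v‖ := Real.le_norm_self _
      _ ≤ ‖A v‖ * ‖v‖ := (A v).le_opNorm v

theorem exists_mem_closedBall_eq_zero_of_norm_fderiv_sub_le [NormedSpace ℝ F] [CompleteSpace E]
    {Φ : E → F} {A : E →L[ℝ] F} (A' : A.NonlinearRightInverse) {u : E} {δ : ℝ} {c : ℝ≥0}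
    (hδ : 0 ≤ δ)
    (hΦ : ∀ x ∈ closedBall u δ, DifferentiableAt ℝ Φ x)
    (hΦA : ∀ x ∈ closedBall u δ, ‖fderiv ℝ Φ x - A‖ ≤ c)
    (hu : ‖Φ u‖ ≤ ((A'.nnnorm : ℝ)⁻¹ - c) * δ) :
    ∃ y ∈ closedBall u δ, Φ y = 0 := by
  have hlin : ApproximatesLinearOn Φ A (closedBall u δ) c := fun x hx y hy =>
    (convex_closedBall u δ).norm_image_sub_le_of_norm_fderiv_le' hΦ hΦA hy hx
  exact hlin.surjOn_closedBall_of_nonlinearRightInverse A' hδ subset_rfl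
    (by rwa [mem_closedBall, dist_comm, dist_zero_right])

theorem norm_sub_le_add_mul_norm_sub_of_mem_closedBall {P Q : E → F} (hQ : Continuous Q)
    {u : E} {r η M : ℝ} (hr : 0 < r) (hQP : ∀ x ∈ ball u r, ‖Q x - P x‖ ≤ η)
    (hP : ∀ x ∈ ball u r, ‖P x - P u‖ ≤ M * ‖x - u‖) :
    ∀ x ∈ closedBall u r, ‖Q x - P u‖ ≤ η + M * ‖x - u‖ := by
  have hclosed : IsClosed {x | ‖Q x - P u‖ ≤ η + M * ‖x - u‖} := by
    apply isClosed_le <;> fun_prop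
  rw [← closure_ball u hr.ne']
  refine hclosed.closure_subset_iff.2 fun x hx => ?_
  calc ‖Q x - P u‖ ≤ ‖Q x - P x‖ + ‖P x - P u‖ := norm_sub_le_norm_sub_add_norm_sub _ _ _
    _ ≤ η + M * ‖x - u‖ := add_le_add (hQP x hx) (hP x hx)

end Normed

section Coercive

variable {H : Type*} [NormedAddCommGroup H] [InnerProductSpace ℝ H] [CompleteSpace H]

theorem IsCoercive.apply_continuousLinearEquivOfBilin_symm {A : H →L[ℝ] H →L[ℝ] ℝ}
    (hA : IsCoercive A) (y : H →L[ℝ] ℝ) :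
    A (hA.continuousLinearEquivOfBilin.symm ((toDual ℝ H).symm y)) = y := by
  ext z
  rw [← hA.continuousLinearEquivOfBilin_apply, ContinuousLinearEquiv.apply_symm_apply,
    toDual_symm_apply]

noncomputable def coerciveRightInverse (A : H →L[ℝ] H →L[ℝ] ℝ) {γ : ℝ} (hγ : 0 < γ)
    (hA : ∀ v, γ * ‖v‖ ^ 2 ≤ A v v) : A.NonlinearRightInverse :=
  have hcoer : IsCoercive A := ⟨γ, hγ, fun v => by simpa only [mul_assoc, sq] using hA v⟩
  { toFun := fun y => hcoer.continuousLinearEquivOfBilin.symm ((toDual ℝ H).symm y)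
    nnnorm := γ.toNNReal⁻¹
    bound' := fun y => by
      rw [NNReal.coe_inv, Real.coe_toNNReal _ hγ.le, inv_mul_eq_div, le_div_iff₀' hγ]
      simpa only [hcoer.apply_continuousLinearEquivOfBilin_symm] using
        mul_norm_le_norm_apply_of_coercive hA
          (hcoer.continuousLinearEquivOfBilin.symm ((toDual ℝ H).symm y))
    right_inv' := hcoer.apply_continuousLinearEquivOfBilin_symm }

theorem inv_nnnorm_coerciveRightInverse (A : H →L[ℝ] H →L[ℝ] ℝ) {γ : ℝ} (hγ : 0 < γ)
    (hA : ∀ v, γ * ‖v‖ ^ 2 ≤ A v v) :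
    ((coerciveRightInverse A hγ hA).nnnorm : ℝ)⁻¹ = γ := by
  simp only [coerciveRightInverse, NNReal.coe_inv, Real.coe_toNNReal _ hγ.le, inv_inv]

end Coercive

theorem quantitative_inverse_function_theorem_general
    {H : Type*} [NormedAddCommGroup H] [InnerProductSpace ℝ H] [CompleteSpace H]
    (f g : H → ℝ) (hg : ContDiff ℝ 2 g)
    (u : H) (γ M r ε : ℝ) (hγ : 0 < γ) (hM : 0 < M) (hr : 0 < r)
    (hstab : ∀ v : H, γ * ‖v‖ ^ 2 ≤ fderiv ℝ (fderiv ℝ f) u v v)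
    (hLip : ∀ v ∈ ball u r, ∀ w ∈ ball u r,
      ‖fderiv ℝ (fderiv ℝ f) v - fderiv ℝ (fderiv ℝ f) w‖ ≤ M * ‖v - w‖)
    (hgres : ‖fderiv ℝ g u‖ ≤ ε)
    (hghess : ∀ v ∈ ball u r,
      ‖fderiv ℝ (fderiv ℝ g) v - fderiv ℝ (fderiv ℝ f) v‖ ≤ γ / 4)
    (hsmall : ε ≤ γ ^ 2 / (8 * M)) (hrad : 4 * ε / γ ≤ r) :
    ∃ ug : H, fderiv ℝ g ug = 0 ∧ ‖ug - u‖ ≤ 4 * ε / γ := by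
  have hε : 0 ≤ ε := (norm_nonneg _).trans hgres
  have hMδ : M * (4 * ε / γ) ≤ γ / 2 := by
    rw [le_div_iff₀ (by positivity)] at hsmall
    rw [mul_div_assoc', div_le_div_iff₀ hγ two_pos]
    nlinarith
  have hDg : ContDiff ℝ 1 (fderiv ℝ g) := hg.fderiv_right (by norm_num)
  have hhess := norm_sub_le_add_mul_norm_sub_of_mem_closedBall
    (hDg.continuous_fderiv one_ne_zero) hr hghess fun x hx => hLip x hx u (mem_ball_self hr)
  obtain ⟨ug, hug, hcrit⟩ := exists_mem_closedBall_eq_zero_of_norm_fderiv_sub_le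
    (coerciveRightInverse _ hγ hstab) (δ := 4 * ε / γ) (c := (3 * γ / 4).toNNReal)
    (by positivity)
    (fun x _ => hDg.differentiable one_ne_zero x)
    (fun x hx => by
      have hxu : ‖x - u‖ ≤ 4 * ε / γ := mem_closedBall_iff_norm.1 hx
      rw [Real.coe_toNNReal _ (by positivity)]
      linarith [hhess x (closedBall_subset_closedBall hrad hx),
        mul_le_mul_of_nonneg_left hxu hM.le])
    (by
      rw [inv_nnnorm_coerciveRightInverse, Real.coe_toNNReal _ (by positivity)]
      convert hgres using 1
      field_simp
      ring)
  exact ⟨ug, hcrit, mem_closedBall_iff_norm.1 hug⟩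

/-- Quantitative inverse function theorem for energy functionals: let `f` be `C²`
with `δf(u*) = 0`, `δ²f(u*) ≥ γ > 0`, and `δ²f` Lipschitz with constant `M` on
`B(u*, r)`.  If `g` is `C²` with `‖δg(u*)‖ ≤ ε`, `‖δ²g - δ²f‖ ≤ γ/4` on `B(u*, r)`,
and `ε ≤ γ²/(8M)` (with `4ε/γ ≤ r`), then `g` has a critical point `u_g` with
`‖u_g - u*‖ ≤ 4ε/γ`. -/
theorem quantitative_inverse_function_theorem
    {H : Type*} [NormedAddCommGroup H] [InnerProductSpace ℝ H] [CompleteSpace H]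
    (f g : H → ℝ) (hf : ContDiff ℝ 2 f) (hg : ContDiff ℝ 2 g)
    (u : H) (γ M r ε : ℝ) (hγ : 0 < γ) (hM : 0 < M) (hr : 0 < r) (hε : 0 ≤ ε)
    (hcrit : fderiv ℝ f u = 0)
    (hstab : ∀ v : H, γ * ‖v‖ ^ 2 ≤ fderiv ℝ (fderiv ℝ f) u v v)
    (hLip : ∀ v ∈ ball u r, ∀ w ∈ ball u r,
      ‖fderiv ℝ (fderiv ℝ f) v - fderiv ℝ (fderiv ℝ f) w‖ ≤ M * ‖v - w‖)
    (hgres : ‖fderiv ℝ g u‖ ≤ ε)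
    (hghess : ∀ v ∈ ball u r,
      ‖fderiv ℝ (fderiv ℝ g) v - fderiv ℝ (fderiv ℝ f) v‖ ≤ γ / 4)
    (hsmall : ε ≤ γ ^ 2 / (8 * M)) (hrad : 4 * ε / γ ≤ r) :
    ∃ ug : H, fderiv ℝ g ug = 0 ∧ ‖ug - u‖ ≤ 4 * ε / γ :=
  quantitative_inverse_function_theorem_general f g hg u γ M r ε hγ hM hr hstab hLip hgres hghess
    hsmall hrad
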